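/- arXiv:1912.07585 — 2 statements merged into one kernel-verified Lean document; each statement's English description precedes it below -/
import Mathlib

section
/- Let φ ∈ L²(ℝ) be a unit vector, let p = |φ⟩⟨φ| and q = 1 − p on L²(ℝ), and on L²(ℝ^N) let p_j, q_j denote the corresponding operators acting in the j-th variable. Define, for k ∈ {0,…,N}, P_k := Σ over subsets S ⊆ {1,…,N} of cardinality k of (∏_{j∈S} q_j)(∏_{j∉S} p_j). Then: (i) each P_k is an orthogonal projection; (ii) P_k P_l = 0 for k ≠ l; (iii) Σ_{k=0}^N P_k is the identity on L²(ℝ^N); and (iv) Σ_{j=1}^N q_j P_k = k·P_k for every k. -/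
/-!
The `p_j` are commuting self-adjoint elements, so they generate a commutative star subalgebra and
everything reduces to commutative algebra. There the atoms `∏_{j∈S} q_j ∏_{j∉S} p_j`, `S ⊆ ι`,
form a complete family of orthogonal idempotents: completeness is the expansion of
`∏_j (q_j + p_j) = 1`, and two different atoms share a factor `q_j p_j = 0`. `P_k` is the sum of
the atoms with `|S| = k`, and `q_j` acts on the atom of `S` as the indicator of `j ∈ S`, so
`∑_j q_j` multiplies it by `|S|`.
-/

open Finset Function

namespace OrthogonalIdempotents

variable {R I J : Type*} [Semiring R] {e : I → R}

lemma sum_of_pairwiseDisjoint (he : OrthogonalIdempotents e) {s : J → Finset I}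
    (hs : Pairwise (Disjoint on s)) : OrthogonalIdempotents fun j ↦ ∑ i ∈ s j, e i where
  idem _ := he.isIdempotentElem_sum
  ortho _ _ hjk := by
    simp only [sum_mul]
    exact sum_eq_zero fun _ hi ↦ he.mul_sum_of_notMem (disjoint_left.mp (hs hjk) hi)

end OrthogonalIdempotents

namespace Pickl

variable {R ι : Type*} [CommRing R] [Fintype ι] [DecidableEq ι] (p : ι → R)

def atom (S : Finset ι) : R := ∏ j, if j ∈ S then 1 - p j else p j

def proj (k : ℕ) : R := ∑ S ∈ powersetCard k univ, atom p S

lemma atom_eq_prod_mul_prod (S : Finset ι) :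
    atom p S = (∏ j ∈ S, (1 - p j)) * ∏ j ∈ univ \ S, p j := by
  rw [atom, prod_ite, filter_mem_eq_inter, univ_inter, filter_not, filter_mem_eq_inter, univ_inter]

lemma sum_atom : ∑ S, atom p S = 1 := by
  simp_rw [← powerset_univ, atom_eq_prod_mul_prod, ← prod_add, sub_add_cancel, prod_const_one]

lemma sum_range_proj : ∑ k ∈ range (Fintype.card ι + 1), proj p k = 1 := by
  rw [← sum_atom p, ← powerset_univ, ← sum_fiberwise_of_maps_to (g := card)
    (t := range (Fintype.card ι + 1))]
  · simp only [proj, powersetCard_eq_filter]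
  · exact fun S _ ↦ mem_range_succ_iff.mpr (card_le_univ S)

variable {p}

lemma atom_mul_atom (hp : ∀ j, IsIdempotentElem (p j)) (S T : Finset ι) :
    atom p S * atom p T = if S = T then atom p S else 0 := by
  rw [atom, atom, ← prod_mul_distrib]
  split_ifs with hST
  · subst hST
    exact prod_congr rfl fun j _ ↦ by split_ifs; exacts [(hp j).one_sub.eq, (hp j).eq]
  · obtain ⟨j, hj⟩ : ∃ j, ¬(j ∈ S ↔ j ∈ T) := by
      by_contra! h
      exact hST (ext h)
    refine prod_eq_zero (mem_univ j) ?_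
    by_cases hS : j ∈ S <;> simp only [hS, true_iff, false_iff, not_not] at hj <;>
      simp [hS, hj, (hp j).one_sub_mul_self, (hp j).mul_one_sub_self]

lemma completeOrthogonalIdempotents_atom (hp : ∀ j, IsIdempotentElem (p j)) :
    CompleteOrthogonalIdempotents (atom p) where
  toOrthogonalIdempotents := OrthogonalIdempotents.iff_mul_eq.mpr (atom_mul_atom hp)
  complete := sum_atom p

lemma one_sub_mul_atom (hp : ∀ j, IsIdempotentElem (p j)) (j : ι) (S : Finset ι) :
    (1 - p j) * atom p S = if j ∈ S then atom p S else 0 := by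
  rw [atom, ← mul_prod_erase _ _ (mem_univ j), ← mul_assoc]
  split_ifs with hj
  · rw [(hp j).one_sub.eq]
  · rw [(hp j).one_sub_mul_self, zero_mul]

lemma isSelfAdjoint_atom [StarRing R] (hp : ∀ j, IsSelfAdjoint (p j)) (S : Finset ι) :
    IsSelfAdjoint (atom p S) :=
  prod_induction _ _ (fun _ _ ↦ IsSelfAdjoint.mul) (.one R) fun j _ ↦ by
    split_ifs; exacts [.sub (.one R) (hp j), hp j]

lemma orthogonalIdempotents_proj (hp : ∀ j, IsIdempotentElem (p j)) :
    OrthogonalIdempotents (proj p) :=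
  (completeOrthogonalIdempotents_atom hp).toOrthogonalIdempotents.sum_of_pairwiseDisjoint
    (pairwise_disjoint_powersetCard univ)

lemma sum_one_sub_mul_proj (hp : ∀ j, IsIdempotentElem (p j)) (k : ℕ) :
    (∑ j, (1 - p j)) * proj p k = k • proj p k := by
  rw [proj, sum_mul_sum, sum_comm, smul_sum]
  refine sum_congr rfl fun S hS ↦ ?_
  simp_rw [one_sub_mul_atom hp, sum_ite_mem, univ_inter, sum_const, (mem_powersetCard.mp hS).2]

lemma isSelfAdjoint_proj [StarRing R] (hp : ∀ j, IsSelfAdjoint (p j)) (k : ℕ) :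
    IsSelfAdjoint (proj p k) :=
  isSelfAdjoint_sum _ fun S _ ↦ isSelfAdjoint_atom hp S

end Pickl

lemma StarAlgebra.isMulCommutative_adjoin_range {R A ι : Type*} [CommSemiring R] [StarRing R]
    [Semiring A] [StarRing A] [Algebra R A] [StarModule R A] {p : ι → A}
    (hsa : ∀ j, IsSelfAdjoint (p j)) (hcomm : ∀ i j, Commute (p i) (p j)) :
    IsMulCommutative (adjoin R (Set.range p)) := by
  refine isMulCommutative_adjoin R ?_ ?_ <;>
    rintro _ ⟨i, rfl⟩ _ ⟨j, rfl⟩ <;> simp only [(hsa j).star_eq, (hcomm i j).eq]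

/-- Properties of the Pickl projections `P_k`. Abstractly, on a Hilbert space `E`
(such as `L²(ℝ^N)`), let `p_j` be commuting orthogonal projections (such as the
projections `|φ⟩⟨φ|` acting in the `j`-th variable), `q_j = 1 − p_j`, and
`P_k = Σ_{|S| = k} (∏_{j∈S} q_j)(∏_{j∉S} p_j)`. Then: (i) each `P_k` is an
orthogonal projection; (ii) `P_k P_l = 0` for `k ≠ l`; (iii) `Σ_{k=0}^N P_k = 1`;
(iv) `Σ_j q_j P_k = k P_k`. -/
theorem pickl_projection_properties {E : Type*} [NormedAddCommGroup E]
    [InnerProductSpace ℂ E] [CompleteSpace E]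
    (N : ℕ) (p : Fin N → E →L[ℂ] E)
    (hidem : ∀ j, IsIdempotentElem (p j))
    (hsa : ∀ j, IsSelfAdjoint (p j))
    (hcomm : ∀ i j, Commute (p i) (p j))
    (P : ℕ → E →L[ℂ] E)
    (hP : ∀ k, P k = ∑ S ∈ Finset.powersetCard k (Finset.univ : Finset (Fin N)),
        ((List.finRange N).map (fun j => if j ∈ S then 1 - p j else p j)).prod) :
    (∀ k, IsIdempotentElem (P k) ∧ IsSelfAdjoint (P k)) ∧
    (∀ k l, k ≠ l → P k * P l = 0) ∧
    (∑ k ∈ Finset.range (N + 1), P k = 1) ∧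
    (∀ k, (∑ j, (1 - p j)) * P k = (k : ℂ) • P k) := by
  -- the scoped instances make `B` a `CommRing` once `IsMulCommutative B` is known
  open scoped IsMulCommutative in
  set B := StarAlgebra.adjoin ℂ (Set.range p)
  have : IsMulCommutative B := StarAlgebra.isMulCommutative_adjoin_range hsa hcomm
  let p' (j : Fin N) : B := ⟨p j, StarAlgebra.subset_adjoin ℂ _ ⟨j, rfl⟩⟩
  have hidem' (j : Fin N) : IsIdempotentElem (p' j) := Subtype.ext (hidem j)
  have hsa' (j : Fin N) : IsSelfAdjoint (p' j) := Subtype.ext (hsa j)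
  have hP' (k : ℕ) : P k = B.subtype (Pickl.proj p' k) := by
    simp only [hP, Pickl.proj, Pickl.atom, map_sum, Fin.prod_univ_def, map_list_prod,
      List.map_map, comp_def, apply_ite, map_sub, map_one]
    rfl
  have hproj := Pickl.orthogonalIdempotents_proj hidem'
  refine ⟨fun k ↦ ⟨?_, ?_⟩, fun k l hkl ↦ ?_, ?_, fun k ↦ ?_⟩
  · rw [hP']; exact (hproj.idem k).map _
  · rw [hP']; exact (Pickl.isSelfAdjoint_proj hsa' k).map _
  · rw [hP', hP', ← map_mul, hproj.ortho hkl, map_zero]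
  · have h := Pickl.sum_range_proj p'
    rw [Fintype.card_fin] at h
    simp_rw [hP', ← map_sum, h, map_one]
  · rw [hP', Nat.cast_smul_eq_nsmul, ← map_nsmul, ← Pickl.sum_one_sub_mul_proj hidem', map_mul,
      map_sum]
    rfl
end

section
/- In the setting of the previous statement, for every Φ ∈ L²_{sym}(ℝ^N) with N ≥ 2: ‖f̂^{1/2} q_1 q_2 Φ‖² = ⟨Φ, f̂ q_1 q_2 Φ⟩ ≤ (N/(N−1))·⟨Φ, f̂ m̂_N² Φ⟩, where m̂_N² = Σ_k (k/N)² P_k. -/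
/-!
Write `Q = q_i q_j`. Since `Q` is a projection commuting with `f̂ = (f̂^{1/2})²`,
`⟪Φ, f̂ Q Φ⟫ = ⟪QΦ, f̂ QΦ⟫ = ‖f̂^{1/2} QΦ‖²`. For the bound, work in one sector `P_k`: there
`(Σ_a q_a)² = Σ_a q_a + Σ_{a ≠ b} q_a q_b` acts as `k²`, so `P_k Σ_{a ≠ b} q_a q_b = (k² - k) P_k`,
and by symmetry all `N(N-1)` pair terms have the same expectation. Hence
`N(N-1) ⟪Φ, P_k Q Φ⟫ = (k² - k) ⟪Φ, P_k Φ⟫ ≤ k² ⟪Φ, P_k Φ⟫`; weight by `f k ≥ 0` and sum over `k`.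
-/
open Finset RCLike
open scoped InnerProductSpace

theorem sum_smul_mul_sum_smul_of_orthogonal {S R ι : Type*} [CommSemiring S] [Semiring R]
    [Algebra S R] (s : Finset ι) (P : ι → R) (hP : ∀ k, IsIdempotentElem (P k))
    (horth : ∀ k l, k ≠ l → P k * P l = 0) (a b : ι → S) :
    (∑ k ∈ s, a k • P k) * (∑ k ∈ s, b k • P k) = ∑ k ∈ s, (a k * b k) • P k := by
  rw [sum_mul_sum]
  refine sum_congr rfl fun k hk => ?_
  rw [sum_eq_single_of_mem k hk fun l _ hlk => ?_]
  · rw [smul_mul_smul_comm, (hP k).eq]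
  · rw [smul_mul_smul_comm, horth k l hlk.symm, smul_zero]

theorem sum_mul_sum_eq_sum_add_sum_offDiag {R ι : Type*} [Semiring R] [DecidableEq ι]
    (s : Finset ι) (q : ι → R) (hq : ∀ j, IsIdempotentElem (q j)) :
    (∑ j ∈ s, q j) * (∑ j ∈ s, q j) = ∑ j ∈ s, q j + ∑ ab ∈ s.offDiag, q ab.1 * q ab.2 := by
  rw [sum_mul_sum, ← sum_product', ← diag_union_offDiag, sum_union (disjoint_diag_offDiag _),
    sum_diag]
  simp only [(hq _).eq]

theorem mul_sum_offDiag_eq_of_sum_mul_eq_smul {S R ι : Type*} [CommRing S] [Ring R] [Algebra S R]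
    [DecidableEq ι] (s : Finset ι) (q : ι → R) (hq : ∀ j, IsIdempotentElem (q j)) {p : R}
    (hqp : ∀ j, Commute (q j) p) {k : S} (hk : (∑ j ∈ s, q j) * p = k • p) :
    p * ∑ ab ∈ s.offDiag, q ab.1 * q ab.2 = (k ^ 2 - k) • p := by
  have hpk : p * ∑ j ∈ s, q j = k • p :=
    (Commute.sum_left _ _ _ fun j _ => hqp j).eq.symm.trans hk
  have hpk2 : p * ((∑ j ∈ s, q j) * (∑ j ∈ s, q j)) = k ^ 2 • p := by
    rw [← mul_assoc, hpk, smul_mul_assoc, hpk, smul_smul, sq]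
  rw [sum_mul_sum_eq_sum_add_sum_offDiag s q hq, mul_add, hpk] at hpk2
  rw [sub_smul, ← hpk2, add_sub_cancel_left]

section InnerProductSpace

variable {𝕜 E : Type*} [RCLike 𝕜] [NormedAddCommGroup E] [InnerProductSpace 𝕜 E]

theorem re_inner_sum_ofReal_smul_apply {ι : Type*} (s : Finset ι) (a : ι → ℝ)
    (T : ι → E →L[𝕜] E) (x y : E) :
    re ⟪x, (∑ k ∈ s, (a k : 𝕜) • T k) y⟫_𝕜 = ∑ k ∈ s, a k * re ⟪x, T k y⟫_𝕜 := by
  simp [inner_sum, inner_smul_right]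

theorem card_mul_inner_pair_eq {ι : Type*} [Fintype ι] [DecidableEq ι] (q : ι → E →L[𝕜] E)
    (hq : ∀ j, IsIdempotentElem (q j)) {P : E →L[𝕜] E} (hqP : ∀ j, Commute (q j) P) {k : 𝕜}
    (hk : (∑ j, q j) * P = k • P) (x : E) {i j : ι}
    (hsym : ∀ a b, a ≠ b → ⟪x, (P * (q a * q b)) x⟫_𝕜 = ⟪x, (P * (q i * q j)) x⟫_𝕜) :
    ((Fintype.card ι * (Fintype.card ι - 1) : ℕ) : 𝕜) * ⟪x, (P * (q i * q j)) x⟫_𝕜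
      = (k ^ 2 - k) * ⟪x, P x⟫_𝕜 := by
  calc _ = ∑ ab ∈ univ.offDiag, ⟪x, (P * (q ab.1 * q ab.2)) x⟫_𝕜 := by
        rw [sum_congr rfl fun ab hab => hsym ab.1 ab.2 (mem_offDiag.mp hab).2.2, sum_const,
          offDiag_card, card_univ, Nat.mul_sub_one, nsmul_eq_mul]
    _ = ⟪x, (P * ∑ ab ∈ univ.offDiag, q ab.1 * q ab.2) x⟫_𝕜 := by
        simp only [mul_sum, _root_.sum_apply, inner_sum]
    _ = _ := by
        rw [mul_sum_offDiag_eq_of_sum_mul_eq_smul univ q hq hqP hk,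
          _root_.smul_apply, inner_smul_right]

theorem re_inner_mul_pair_le {ι : Type*} [Fintype ι] [DecidableEq ι]
    (hcard : 1 < Fintype.card ι) (q : ι → E →L[𝕜] E) (hq : ∀ j, IsIdempotentElem (q j))
    {P : E →L[𝕜] E} (hP : P.IsPositive) (hqP : ∀ j, Commute (q j) P) {k : ℕ}
    (hk : (∑ j, q j) * P = (k : 𝕜) • P) (x : E) {i j : ι}
    (hsym : ∀ a b, a ≠ b → ⟪x, (P * (q a * q b)) x⟫_𝕜 = ⟪x, (P * (q i * q j)) x⟫_𝕜) :
    re ⟪x, (P * (q i * q j)) x⟫_𝕜 ≤ (Fintype.card ι : ℝ) / (Fintype.card ι - 1)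
      * (((k : ℝ) / Fintype.card ι) ^ 2 * re ⟪x, P x⟫_𝕜) := by
  set n : ℝ := (Fintype.card ι : ℝ) with hn_def
  have hn : 1 < n := Nat.one_lt_cast.mpr hcard
  have hcount := card_mul_inner_pair_eq q hq hqP hk x hsym
  rw [show ((Fintype.card ι * (Fintype.card ι - 1) : ℕ) : 𝕜) = ((n * (n - 1) : ℝ) : 𝕜) by
      push_cast [Nat.cast_pred (by omega : 0 < Fintype.card ι), hn_def]; ring,
    show (k : 𝕜) ^ 2 - k = (((k : ℝ) ^ 2 - k : ℝ) : 𝕜) by push_cast; rfl] at hcount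
  have hre := congrArg re hcount
  simp only [re_ofReal_mul] at hre
  have hp := hP.re_inner_nonneg_right x
  rw [show n / (n - 1) * ((k / n) ^ 2 * re ⟪x, P x⟫_𝕜) = k ^ 2 * re ⟪x, P x⟫_𝕜 / (n * (n - 1)) by
      field_simp, le_div_iff₀ (by nlinarith)]
  nlinarith [mul_nonneg (Nat.cast_nonneg k : (0 : ℝ) ≤ k) hp]

variable [CompleteSpace E]

theorem norm_sq_apply_eq_re_inner_mul_self_apply {G Q : E →L[𝕜] E} (hG : IsSelfAdjoint G)
    (hQ : IsStarProjection Q) (hGQ : Commute G Q) (x : E) :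
    ‖G (Q x)‖ ^ 2 = re ⟪x, (G * G) (Q x)⟫_𝕜 := by
  have hQGGQ : Q * (G * G * Q) = G * G * Q := by
    rw [← mul_assoc, ← (hGQ.mul_left hGQ).eq, mul_assoc, hQ.isIdempotentElem.eq]
  calc ‖G (Q x)‖ ^ 2 = re ⟪G (Q x), G (Q x)⟫_𝕜 := (inner_self_eq_norm_sq _).symm
    _ = re ⟪Q x, G (G (Q x))⟫_𝕜 := congrArg re (hG.isSymmetric _ _)
    _ = re ⟪x, Q (G (G (Q x)))⟫_𝕜 := congrArg re (hQ.isSelfAdjoint.isSymmetric _ _)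
    _ = re ⟪x, (G * G) (Q x)⟫_𝕜 := congrArg (fun T => re ⟪x, T x⟫_𝕜) hQGGQ

theorem isSelfAdjoint_sum_ofReal_smul {ι : Type*} (s : Finset ι) (a : ι → ℝ) {T : ι → E →L[𝕜] E}
    (hT : ∀ k, IsSelfAdjoint (T k)) : IsSelfAdjoint (∑ k ∈ s, (a k : 𝕜) • T k) :=
  isSelfAdjoint_sum s fun k _ => (show IsSelfAdjoint (a k : 𝕜) from conj_ofReal _).smul (hT k)

end InnerProductSpace

theorem fhat_q1q2_inequality_general {E : Type*} [NormedAddCommGroup E] [InnerProductSpace ℂ E]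
    [CompleteSpace E] (N : ℕ) (hN : 2 ≤ N)
    (q : Fin N → E →L[ℂ] E) (P : ℕ → E →L[ℂ] E)
    (hqsa : ∀ j, IsSelfAdjoint (q j)) (hqidem : ∀ j, IsIdempotentElem (q j))
    (hqq : ∀ i j, Commute (q i) (q j))
    (hPsa : ∀ k, IsSelfAdjoint (P k)) (hPidem : ∀ k, IsIdempotentElem (P k))
    (horth : ∀ k l, k ≠ l → P k * P l = 0)
    (hqP : ∀ j k, Commute (q j) (P k))
    (hcount : ∀ k, (∑ j, q j) * P k = (k : ℂ) • P k)
    (f : ℕ → ℝ) (hf : ∀ k, 0 ≤ f k)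
    (Φ : E)
    (hsym2 : ∀ (a b a' b' : Fin N), a ≠ b → a' ≠ b' → ∀ k : ℕ,
      (inner ℂ Φ ((P k * (q a * q b)) Φ) : ℂ) = inner ℂ Φ ((P k * (q a' * q b')) Φ))
    (i j : Fin N) (hij : i ≠ j) :
    (‖(∑ k ∈ Finset.range (N + 1), ((Real.sqrt (f k) : ℂ)) • P k) ((q i) ((q j) Φ))‖ ^ 2 : ℝ)
        = (inner ℂ Φ ((∑ k ∈ Finset.range (N + 1), ((f k : ℂ)) • P k) ((q i) ((q j) Φ))) : ℂ).re ∧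
    ((inner ℂ Φ ((∑ k ∈ Finset.range (N + 1), ((f k : ℂ)) • P k) ((q i) ((q j) Φ))) : ℂ).re
        ≤ ((N : ℝ) / ((N : ℝ) - 1)) *
          (inner ℂ Φ (((∑ k ∈ Finset.range (N + 1), ((f k : ℂ)) • P k)
            * ((∑ k ∈ Finset.range (N + 1), ((k : ℂ) / N) • P k)
              * (∑ k ∈ Finset.range (N + 1), ((k : ℂ) / N) • P k))) Φ) : ℂ).re) := by
  have hQ : IsStarProjection (q i * q j) :=
    .mul ⟨hqidem i, hqsa i⟩ ⟨hqidem j, hqsa j⟩ (hqq i j)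
  have hPQ : ∀ k, Commute (P k) (q i * q j) := fun k => ((hqP i k).mul_left (hqP j k)).symm
  constructor
  · have hGG : (∑ k ∈ range (N + 1), ((√(f k) : ℝ) : ℂ) • P k)
        * (∑ k ∈ range (N + 1), ((√(f k) : ℝ) : ℂ) • P k)
        = ∑ k ∈ range (N + 1), (f k : ℂ) • P k := by
      rw [sum_smul_mul_sum_smul_of_orthogonal _ P hPidem horth]
      refine sum_congr rfl fun k _ => ?_
      rw [← Complex.ofReal_mul, Real.mul_self_sqrt (hf k)]
    rw [← hGG]
    exact norm_sq_apply_eq_re_inner_mul_self_apply (isSelfAdjoint_sum_ofReal_smul _ _ hPsa)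
      hQ (Commute.sum_left _ _ _ fun k _ => (hPQ k).smul_left _) Φ
  · have hFMM : (∑ k ∈ range (N + 1), (f k : ℂ) • P k)
        * ((∑ k ∈ range (N + 1), ((k : ℂ) / N) • P k) * (∑ k ∈ range (N + 1), ((k : ℂ) / N) • P k))
        = ∑ k ∈ range (N + 1), ((f k * ((k : ℝ) / N) ^ 2 : ℝ) : ℂ) • P k := by
      simp only [sum_smul_mul_sum_smul_of_orthogonal _ P hPidem horth]
      refine sum_congr rfl fun k _ => congrArg (· • P k) ?_
      push_cast
      ring
    have hpair : ∀ k, re ⟪Φ, P k (q i (q j Φ))⟫_ℂ ≤ N / (N - 1) * ((k / N) ^ 2 * re ⟪Φ, P k Φ⟫_ℂ) :=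
      fun k => by
        have h := re_inner_mul_pair_le (by rwa [Fintype.card_fin]) q hqidem
          (.of_isStarProjection ⟨hPidem k, hPsa k⟩) (fun a => hqP a k) (hcount k) Φ
          fun a b hab => hsym2 a b i j hab hij k
        rwa [Fintype.card_fin] at h
    calc _ = ∑ k ∈ range (N + 1), f k * re ⟪Φ, P k (q i (q j Φ))⟫_ℂ :=
          re_inner_sum_ofReal_smul_apply _ _ _ _ _
      _ ≤ ∑ k ∈ range (N + 1), N / (N - 1) * (f k * (k / N) ^ 2 * re ⟪Φ, P k Φ⟫_ℂ) :=
          sum_le_sum fun k _ => by nlinarith [mul_le_mul_of_nonneg_left (hpair k) (hf k)]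
      _ = _ := by
          rw [← mul_sum, hFMM]
          exact congrArg _ (re_inner_sum_ofReal_smul_apply _ _ _ _ _).symm

/-- Knowles–Pickl Lemma 3.9(ii) in the Pickl projection formalism: for `f ≥ 0`,
`N ≥ 2`, and symmetric `Φ`,
`‖f̂^{1/2} q_1 q_2 Φ‖² = ⟨Φ, f̂ q_1 q_2 Φ⟩ ≤ (N/(N−1)) ⟨Φ, f̂ m̂_N² Φ⟩`,
where `f̂ = Σ_{k=0}^N f(k) P_k`, `f̂^{1/2} = Σ_k √(f(k)) P_k`, and
`m̂_N = Σ_k (k/N) P_k`. -/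
theorem fhat_q1q2_inequality {E : Type*} [NormedAddCommGroup E] [InnerProductSpace ℂ E]
    [CompleteSpace E] (N : ℕ) (hN : 2 ≤ N)
    (q : Fin N → E →L[ℂ] E) (P : ℕ → E →L[ℂ] E)
    (hqsa : ∀ j, IsSelfAdjoint (q j)) (hqidem : ∀ j, IsIdempotentElem (q j))
    (hqq : ∀ i j, Commute (q i) (q j))
    (hPsa : ∀ k, IsSelfAdjoint (P k)) (hPidem : ∀ k, IsIdempotentElem (P k))
    (horth : ∀ k l, k ≠ l → P k * P l = 0)
    (hPsum : ∑ k ∈ Finset.range (N + 1), P k = 1)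
    (hqP : ∀ j k, Commute (q j) (P k))
    (hcount : ∀ k, (∑ j, q j) * P k = (k : ℂ) • P k)
    (f : ℕ → ℝ) (hf : ∀ k, 0 ≤ f k)
    (Φ : E)
    (hsym2 : ∀ (a b a' b' : Fin N), a ≠ b → a' ≠ b' → ∀ k : ℕ,
      (inner ℂ Φ ((P k * (q a * q b)) Φ) : ℂ) = inner ℂ Φ ((P k * (q a' * q b')) Φ))
    (i j : Fin N) (hij : i ≠ j) :
    (‖(∑ k ∈ Finset.range (N + 1), ((Real.sqrt (f k) : ℂ)) • P k) ((q i) ((q j) Φ))‖ ^ 2 : ℝ)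
        = (inner ℂ Φ ((∑ k ∈ Finset.range (N + 1), ((f k : ℂ)) • P k) ((q i) ((q j) Φ))) : ℂ).re ∧
    ((inner ℂ Φ ((∑ k ∈ Finset.range (N + 1), ((f k : ℂ)) • P k) ((q i) ((q j) Φ))) : ℂ).re
        ≤ ((N : ℝ) / ((N : ℝ) - 1)) *
          (inner ℂ Φ (((∑ k ∈ Finset.range (N + 1), ((f k : ℂ)) • P k)
            * ((∑ k ∈ Finset.range (N + 1), ((k : ℂ) / N) • P k)
              * (∑ k ∈ Finset.range (N + 1), ((k : ℂ) / N) • P k))) Φ) : ℂ).re) :=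
  fhat_q1q2_inequality_general N hN q P hqsa hqidem hqq hPsa hPidem horth hqP hcount f hf Φ hsym2 i
    j hij
end
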